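/- arXiv:1403.3460 — 4 statements merged into one kernel-verified Lean document; each statement's English description precedes it below -/
import Mathlib

section
/- Uniqueness of orthogonal symmetric tensor decomposition: Let d, k be positive natural numbers with k ≤ d. Let v_1, …, v_k be an orthonormal family in the Euclidean space ℝ^d and λ_1, …, λ_k > 0 real numbers; likewise let w_1, …, w_k be an orthonormal family in ℝ^d and μ_1, …, μ_k > 0. If for all x, y, z ∈ ℝ^d one has ∑_{i=1}^k λ_i ⟨v_i,x⟩⟨v_i,y⟩⟨v_i,z⟩ = ∑_{j=1}^k μ_j ⟨w_j,x⟩⟨w_j,y⟩⟨w_j,z⟩, then there exists a permutation σ of {1,…,k} such that μ_j = λ_{σ(j)} and w_j = v_{σ(j)} for every j. -/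
open scoped RealInnerProductSpace

/-- **Uniqueness of orthogonal symmetric tensor decomposition.**
If two orthonormal families with positive weights give the same symmetric
order-3 tensor (identified with its trilinear form), then they coincide up to
a permutation of the components. -/
theorem uniqueness_orthogonal_tensor_decomposition
    (d k : ℕ) (hd : 0 < d) (hk : 0 < k) (hkd : k ≤ d)
    (v w : Fin k → EuclideanSpace ℝ (Fin d)) (lam mu : Fin k → ℝ)
    (hv : Orthonormal ℝ v) (hw : Orthonormal ℝ w)
    (hlam : ∀ i, 0 < lam i) (hmu : ∀ j, 0 < mu j)
    (heq : ∀ x y z : EuclideanSpace ℝ (Fin d),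
      ∑ i, lam i * (⟪v i, x⟫ * ⟪v i, y⟫ * ⟪v i, z⟫)
        = ∑ j, mu j * (⟪w j, x⟫ * ⟪w j, y⟫ * ⟪w j, z⟫)) :
    ∃ σ : Equiv.Perm (Fin k), ∀ j, mu j = lam (σ j) ∧ w j = v (σ j) := by
  classical
  have hv' := orthonormal_iff_ite.mp hv
  have hw' := orthonormal_iff_ite.mp hw
  -- Fact A : lam i * a² = mu j * a
  have factA : ∀ i j, lam i * (⟪v i, w j⟫ * ⟪v i, w j⟫) = mu j * ⟪v i, w j⟫ := by
    intro i j
    have h := heq (w j) (w j) (v i)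
    have hl : ∑ i', lam i' * (⟪v i', w j⟫ * ⟪v i', w j⟫ * ⟪v i', v i⟫)
        = lam i * (⟪v i, w j⟫ * ⟪v i, w j⟫) := by
      rw [Finset.sum_eq_single i]
      · rw [hv' i i]; simp
      · intro b _ hb; rw [hv' b i, if_neg hb]; ring
      · simp
    have hr : ∑ l, mu l * (⟪w l, w j⟫ * ⟪w l, w j⟫ * ⟪w l, v i⟫)
        = mu j * ⟪v i, w j⟫ := by
      rw [Finset.sum_eq_single j]
      · rw [hw' j j, if_pos rfl, real_inner_comm (w j) (v i)]; ring
      · intro b _ hb; rw [hw' b j, if_neg hb]; ring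
      · simp
    rw [hl, hr] at h; exact h
  -- Fact B : for j ≠ j', a i j * a i j' = 0
  have factB : ∀ i j j', j ≠ j' → ⟪v i, w j⟫ * ⟪v i, w j'⟫ = 0 := by
    intro i j j' hjj'
    have h := heq (w j) (w j') (v i)
    have hl : ∑ i', lam i' * (⟪v i', w j⟫ * ⟪v i', w j'⟫ * ⟪v i', v i⟫)
        = lam i * (⟪v i, w j⟫ * ⟪v i, w j'⟫) := by
      rw [Finset.sum_eq_single i]
      · rw [hv' i i]; simp
      · intro b _ hb; rw [hv' b i, if_neg hb]; ring
      · simp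
    have hr : ∑ l, mu l * (⟪w l, w j⟫ * ⟪w l, w j'⟫ * ⟪w l, v i⟫) = 0 := by
      apply Finset.sum_eq_zero
      intro l _
      by_cases hlj : l = j
      · rw [hw' l j', if_neg (by rw [hlj]; exact hjj')]; ring
      · rw [hw' l j, if_neg hlj]; ring
    rw [hl, hr] at h
    rcases mul_eq_zero.mp h with h' | h'
    · exact absurd h' (ne_of_gt (hlam i))
    · exact h'
  -- Fact C : for i ≠ i', a i j * a i' j = 0
  have factC : ∀ j i i', i ≠ i' → ⟪v i, w j⟫ * ⟪v i', w j⟫ = 0 := by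
    intro j i i' hii'
    have h := heq (v i) (v i') (w j)
    have hl : ∑ i'', lam i'' * (⟪v i'', v i⟫ * ⟪v i'', v i'⟫ * ⟪v i'', w j⟫) = 0 := by
      apply Finset.sum_eq_zero
      intro b _
      by_cases hbi : b = i
      · rw [hv' b i', if_neg (by rw [hbi]; exact hii')]; ring
      · rw [hv' b i, if_neg hbi]; ring
    have hr : ∑ l, mu l * (⟪w l, v i⟫ * ⟪w l, v i'⟫ * ⟪w l, w j⟫)
        = mu j * (⟪v i, w j⟫ * ⟪v i', w j⟫) := by
      rw [Finset.sum_eq_single j]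
      · rw [hw' j j, if_pos rfl, real_inner_comm (w j) (v i), real_inner_comm (w j) (v i')]
        ring
      · intro b _ hb; rw [hw' b j, if_neg hb]; ring
      · simp
    rw [hl, hr] at h
    rcases mul_eq_zero.mp h.symm with h' | h'
    · exact absurd h' (ne_of_gt (hmu j))
    · exact h'
  -- Fact D : for each j there is i with a i j ≠ 0
  have factD : ∀ j, ∃ i, ⟪v i, w j⟫ ≠ 0 := by
    intro j
    by_contra hcon
    push_neg at hcon
    have h := heq (w j) (w j) (w j)
    have hl : ∑ i, lam i * (⟪v i, w j⟫ * ⟪v i, w j⟫ * ⟪v i, w j⟫) = 0 := by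
      apply Finset.sum_eq_zero
      intro i _
      rw [hcon i]; ring
    have hr : ∑ l, mu l * (⟪w l, w j⟫ * ⟪w l, w j⟫ * ⟪w l, w j⟫) = mu j := by
      rw [Finset.sum_eq_single j]
      · rw [hw' j j, if_pos rfl]; ring
      · intro b _ hb; rw [hw' b j, if_neg hb]; ring
      · simp
    rw [hl, hr] at h
    exact absurd h.symm (ne_of_gt (hmu j))
  -- the map j ↦ the i with ⟪v i, w j⟫ ≠ 0
  choose f hf using factD
  have hinj : Function.Injective f := by
    intro j j' hjj'
    by_contra hne
    have := factB (f j) j j' hne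
    rw [hjj'] at this
    rcases mul_eq_zero.mp this with h' | h'
    · exact hf j (hjj' ▸ h')
    · exact hf j' h'
  let σ : Equiv.Perm (Fin k) := Equiv.ofBijective f (Finite.injective_iff_bijective.mp hinj)
  refine ⟨σ, fun j => ?_⟩
  have hσ : σ j = f j := rfl
  set i := f j with hi
  set a : ℝ := ⟪v i, w j⟫ with ha
  have ha0 : a ≠ 0 := hf j
  -- lam i * a = mu j
  have hfa := factA i j
  rw [← ha] at hfa
  have hlama : lam i * a = mu j := by
    have h2 : (lam i * a - mu j) * a = 0 := by linear_combination hfa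
    rcases mul_eq_zero.mp h2 with h' | h'
    · linarith
    · exact absurd h' ha0
  have hapos : 0 < a := by
    have hdiv : a = mu j / lam i := by
      rw [eq_div_iff (ne_of_gt (hlam i))]
      linear_combination hlama
    rw [hdiv]
    exact div_pos (hmu j) (hlam i)
  -- vector equation : mu j • w j = (lam i * (a * a)) • v i
  have hvec : (mu j) • (w j) = (lam i * (a * a)) • (v i) := by
    apply ext_inner_right ℝ
    intro z
    have h := heq (w j) (w j) z
    have hl : ∑ i', lam i' * (⟪v i', w j⟫ * ⟪v i', w j⟫ * ⟪v i', z⟫)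
        = lam i * (a * a) * ⟪v i, z⟫ := by
      rw [Finset.sum_eq_single i]
      · rw [← ha]; ring
      · intro b _ hb
        have hb0 : ⟪v b, w j⟫ = 0 := by
          rcases mul_eq_zero.mp (factC j b i hb) with h' | h'
          · exact h'
          · exact absurd h' ha0
        rw [hb0]; ring
      · simp
    have hr : ∑ l, mu l * (⟪w l, w j⟫ * ⟪w l, w j⟫ * ⟪w l, z⟫) = mu j * ⟪w j, z⟫ := by
      rw [Finset.sum_eq_single j]
      · rw [hw' j j, if_pos rfl]; ring
      · intro b _ hb; rw [hw' b j, if_neg hb]; ring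
      · simp
    rw [hl, hr] at h
    rw [real_inner_smul_left, real_inner_smul_left]
    exact h.symm
  -- norms: take norm of both sides
  have ha1 : a = 1 := by
    have hn : ‖(mu j) • (w j)‖ = ‖(lam i * (a * a)) • (v i)‖ := by rw [hvec]
    rw [norm_smul, norm_smul, hw.1 j, hv.1 i, mul_one, mul_one] at hn
    rw [Real.norm_eq_abs, Real.norm_eq_abs, abs_of_pos (hmu j),
      abs_of_pos (mul_pos (hlam i) (mul_pos hapos hapos))] at hn
    -- mu j = lam i * a * a = mu j * a
    have h3 : mu j * a = mu j * 1 := by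
      rw [mul_one]; linear_combination (-a) * hlama - hn
    have h4 := mul_left_cancel₀ (ne_of_gt (hmu j)) h3
    linarith
  have hmu_eq : mu j = lam i := by rw [← hlama, ha1, mul_one]
  have hw_eq : w j = v i := by
    have h2 : (mu j) • (w j) = (mu j) • (v i) := by
      rw [hvec]
      congr 1
      rw [ha1, hmu_eq]; ring
    exact smul_right_injective _ (ne_of_gt (hmu j)) h2
  exact ⟨by rw [hσ, ← hmu_eq], by rw [hσ, ← hw_eq]⟩
end

section
/- Recovery of original components from whitened ones: Let v_1, …, v_k ∈ ℝ^d be linearly independent, λ_1, …, λ_k > 0, M₂ = ∑_{z=1}^k λ_z v_z v_zᵀ, and let W be a d×k real matrix with Wᵀ M₂ W = I_k. Set ṽ_z = √λ_z · Wᵀ v_z. Then for every z, M₂ W ṽ_z = √λ_z · v_z; in particular v_z = λ_z^{-1/2} M₂ W ṽ_z, so each original component is uniquely determined by its whitened counterpart. -/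
open Matrix

/-- **Recovery of original components from whitened ones.**
If `M₂ = ∑ z, λ z • v z v zᵀ` with linearly independent `v z` and `λ z > 0`,
`W` is a whitening matrix (`Wᵀ M₂ W = I`) and `ṽ z = √(λ z) • Wᵀ v z`, then
`M₂ W ṽ z = √(λ z) • v z` for every `z`; in particular
`v z = (√(λ z))⁻¹ • M₂ W ṽ z`. -/
theorem recovery_of_components_from_whitened
    (d k : ℕ) (v : Fin k → Fin d → ℝ) (lam : Fin k → ℝ)
    (hli : LinearIndependent ℝ v) (hlam : ∀ z, 0 < lam z)
    (M2 : Matrix (Fin d) (Fin d) ℝ)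
    (hM2 : M2 = ∑ z, lam z • Matrix.vecMulVec (v z) (v z))
    (W : Matrix (Fin d) (Fin k) ℝ)
    (hW : Wᵀ * M2 * W = 1)
    (vt : Fin k → Fin k → ℝ)
    (hvt : ∀ z, vt z = Real.sqrt (lam z) • Wᵀ.mulVec (v z)) :
    ∀ z, (M2 * W).mulVec (vt z) = Real.sqrt (lam z) • v z ∧
      v z = (Real.sqrt (lam z))⁻¹ • (M2 * W).mulVec (vt z) := by
  -- Let `A` be the k×d matrix with rows `√(lam z) • v z`, so `M2 = Aᵀ * A`.
  set A : Matrix (Fin k) (Fin d) ℝ := Matrix.of fun z => Real.sqrt (lam z) • v z with hA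
  have hMA : M2 = Aᵀ * A := by
    rw [hM2]
    ext i j
    simp only [Matrix.sum_apply, Matrix.smul_apply, Matrix.vecMulVec_apply,
      Matrix.mul_apply, Matrix.transpose_apply, hA, Matrix.of_apply, Pi.smul_apply,
      smul_eq_mul]
    refine Finset.sum_congr rfl fun x _ => ?_
    have h := Real.mul_self_sqrt (hlam x).le
    linear_combination -v x i * v x j * h
  have hB : (A * W)ᵀ * (A * W) = 1 := by
    rw [Matrix.transpose_mul]
    calc Wᵀ * Aᵀ * (A * W) = Wᵀ * (Aᵀ * A) * W := by
          rw [Matrix.mul_assoc, Matrix.mul_assoc, Matrix.mul_assoc]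
      _ = 1 := by rw [← hMA, hW]
  have hBB : (A * W) * (A * W)ᵀ = 1 := mul_eq_one_comm.mp hB
  intro z
  have hsq : Real.sqrt (lam z) ≠ 0 :=
    ne_of_gt (Real.sqrt_pos.mpr (hlam z))
  have hvtz : vt z = (A * W)ᵀ.mulVec (Pi.single z 1) := by
    rw [hvt z]
    ext j
    simp only [Matrix.mulVec, dotProduct, Matrix.transpose_apply, Pi.smul_apply,
      smul_eq_mul, Matrix.mul_apply, hA, Matrix.of_apply]
    rw [Finset.sum_eq_single z (by intro b _ hb; simp [Pi.single_apply, hb])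
      (by intro h; exact absurd (Finset.mem_univ z) h)]
    simp [Pi.single_apply, Finset.mul_sum, Finset.sum_mul]
    refine Finset.sum_congr rfl fun x _ => ?_
    ring
  have key : (M2 * W).mulVec (vt z) = Real.sqrt (lam z) • v z := by
    rw [hvtz, Matrix.mulVec_mulVec, hMA]
    have : Aᵀ * A * W * (A * W)ᵀ = Aᵀ := by
      rw [Matrix.mul_assoc, Matrix.mul_assoc, ← Matrix.mul_assoc A W, hBB,
        Matrix.mul_one]
    rw [this]
    ext i
    simp only [Matrix.mulVec, dotProduct, Matrix.transpose_apply, hA,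
      Matrix.of_apply, Pi.smul_apply, smul_eq_mul]
    rw [Finset.sum_eq_single z (by intro b _ hb; simp [Pi.single_apply, hb])
      (by intro h; exact absurd (Finset.mem_univ z) h)]
    simp [Pi.single_apply]
  refine ⟨key, ?_⟩
  rw [key, smul_smul, inv_mul_cancel₀ hsq, one_smul]
end

section
/- Third-order conditional moment identity for the topic-tree model: Let k ≥ 1, α_1, …, α_k > 0 with α₀ = ∑_z α_z, and φ_1, …, φ_k ∈ ℝ^d. Define the order-3 tensors entrywise (indices a,b,c ∈ {1,…,d}): E₃ with (E₃)_{abc} = (1/(α₀(α₀+1)(α₀+2))) [ ∑_{z₁,z₂,z₃ pairwise distinct} α_{z₁}α_{z₂}α_{z₃} φ_{z₁,a}φ_{z₂,b}φ_{z₃,c} + ∑_{z₁≠z₂} α_{z₁}α_{z₂}(α_{z₁}+1)( φ_{z₁,a}φ_{z₁,b}φ_{z₂,c} + φ_{z₁,a}φ_{z₁,c}φ_{z₂,b} + φ_{z₁,c}φ_{z₁,b}φ_{z₂,a} ) + ∑_z α_z(α_z+1)(α_z+2) φ_{z,a}φ_{z,b}φ_{z,c} ]; M₁ = ∑_z (α_z/α₀)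 φ_z; E₂ with (E₂)_{ab} = (1/(α₀(α₀+1))) [ ∑_{z₁≠z₂} α_{z₁}α_{z₂} φ_{z₁,a}φ_{z₂,b} + ∑_z α_z(α_z+1) φ_{z,a}φ_{z,b} ]; U₁ with (U₁)_{abc} = (E₂)_{ab}(M₁)_c, U₂ with (U₂)_{abc} = (U₁)_{acb}, U₃ with (U₃)_{abc} = (U₁)_{bca}. Then the tensor M₃ := ((α₀+1)(α₀+2)/2) E₃ + α₀² M₁⊗M₁⊗M₁ − (α₀(α₀+1)/2)(U₁+U₂+U₃) satisfies (M₃)_{abc} = ∑_{z=1}^k (α_z/α₀) φ_{z,a} φ_{z,b} φ_{z,c} for all a,b,c. -/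
lemma sum_if_const' {k : ℕ} {c : Prop} [Decidable c] (f : Fin k → ℝ) :
    (∑ x, if c then f x else 0) = if c then ∑ x, f x else 0 := by
  split_ifs <;> simp

lemma pairSplit {k : ℕ} (f : Fin k → Fin k → ℝ) :
    (∑ z₁, ∑ z₂, if z₁ ≠ z₂ then f z₁ z₂ else 0)
      = (∑ z₁, ∑ z₂, f z₁ z₂) - ∑ z, f z z := by
  have point : ∀ z₁ z₂ : Fin k,
      (if z₁ ≠ z₂ then f z₁ z₂ else 0)
        = f z₁ z₂ - (if z₁ = z₂ then f z₁ z₂ else 0) := by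
    intro z₁ z₂; by_cases h : z₁ = z₂ <;> simp [h]
  simp_rw [point, Finset.sum_sub_distrib, Finset.sum_ite_eq, Finset.mem_univ, if_true]

set_option linter.unnecessarySeqFocus false in
lemma tripleSplit {k : ℕ} (f : Fin k → Fin k → Fin k → ℝ) :
    (∑ z₁, ∑ z₂, ∑ z₃, if z₁ ≠ z₂ ∧ z₂ ≠ z₃ ∧ z₁ ≠ z₃ then f z₁ z₂ z₃ else 0)
      = (∑ z₁, ∑ z₂, ∑ z₃, f z₁ z₂ z₃) - (∑ z₁, ∑ z₃, f z₁ z₁ z₃)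
        - (∑ z₁, ∑ z₂, f z₁ z₂ z₂) - (∑ z₁, ∑ z₂, f z₁ z₂ z₁)
        + ∑ z, 2 * f z z z := by
  have point : ∀ z₁ z₂ z₃ : Fin k,
      (if z₁ ≠ z₂ ∧ z₂ ≠ z₃ ∧ z₁ ≠ z₃ then f z₁ z₂ z₃ else 0)
        = f z₁ z₂ z₃ - (if z₁ = z₂ then f z₁ z₂ z₃ else 0)
          - (if z₂ = z₃ then f z₁ z₂ z₃ else 0)
          - (if z₁ = z₃ then f z₁ z₂ z₃ else 0)
          + (if z₁ = z₂ then (if z₁ = z₃ then 2 * f z₁ z₂ z₃ else 0) else 0) := by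
    intro z₁ z₂ z₃
    by_cases h1 : z₁ = z₂ <;> by_cases h2 : z₂ = z₃ <;> by_cases h3 : z₁ = z₃ <;>
      simp_all <;> ring
  simp only [point, Finset.sum_sub_distrib, Finset.sum_add_distrib, sum_if_const',
    Finset.sum_ite_eq, Finset.mem_univ, if_true]

lemma pair_prod {k : ℕ} (u v : Fin k → ℝ) :
    (∑ z₁, ∑ z₂, u z₁ * v z₂) = (∑ z, u z) * (∑ z, v z) := by
  rw [Finset.sum_mul_sum]

lemma triple_prod {k : ℕ} (u v w : Fin k → ℝ) :
    (∑ z₁, ∑ z₂, ∑ z₃, u z₁ * v z₂ * w z₃)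
      = (∑ z, u z) * (∑ z, v z) * (∑ z, w z) := by
  simp only [← Finset.sum_mul, ← Finset.mul_sum]

/-- **Third-order conditional moment identity for the topic-tree model.**
With Dirichlet parameters `α z > 0`, `α₀ = ∑ z, α z`, and topic word
distributions `φ z ∈ ℝ^d`, define entrywise the third moment `E₃`, the first
moment `M₁`, the second moment `E₂`, the auxiliary tensors `U₁, U₂, U₃`, and the
recentered third moment
`M₃ = ((α₀+1)(α₀+2)/2) E₃ + α₀² M₁⊗M₁⊗M₁ − (α₀(α₀+1)/2)(U₁+U₂+U₃)`.
Then `(M₃)_{abc} = ∑ z (α z / α₀) φ_{z,a} φ_{z,b} φ_{z,c}`. -/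
theorem third_order_conditional_moment_identity
    (d k : ℕ) (hk : 1 ≤ k) (α : Fin k → ℝ) (hα : ∀ z, 0 < α z)
    (a0 : ℝ) (ha0 : a0 = ∑ z, α z)
    (φ : Fin k → Fin d → ℝ)
    (E3 : Fin d → Fin d → Fin d → ℝ)
    (hE3 : ∀ a b c, E3 a b c = (a0 * (a0 + 1) * (a0 + 2))⁻¹ *
      ((∑ z₁, ∑ z₂, ∑ z₃, if z₁ ≠ z₂ ∧ z₂ ≠ z₃ ∧ z₁ ≠ z₃ then
          α z₁ * α z₂ * α z₃ * (φ z₁ a * φ z₂ b * φ z₃ c) else 0)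
        + (∑ z₁, ∑ z₂, if z₁ ≠ z₂ then
            α z₁ * α z₂ * (α z₁ + 1) *
              (φ z₁ a * φ z₁ b * φ z₂ c + φ z₁ a * φ z₁ c * φ z₂ b
                + φ z₁ c * φ z₁ b * φ z₂ a) else 0)
        + ∑ z, α z * (α z + 1) * (α z + 2) * (φ z a * φ z b * φ z c)))
    (M1 : Fin d → ℝ) (hM1 : M1 = ∑ z, (α z / a0) • φ z)
    (E2 : Fin d → Fin d → ℝ)
    (hE2 : ∀ a b, E2 a b = (a0 * (a0 + 1))⁻¹ *
      ((∑ z₁, ∑ z₂, if z₁ ≠ z₂ then α z₁ * α z₂ * (φ z₁ a * φ z₂ b) else 0)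
        + ∑ z, α z * (α z + 1) * (φ z a * φ z b)))
    (U1 U2 U3 : Fin d → Fin d → Fin d → ℝ)
    (hU1 : ∀ a b c, U1 a b c = E2 a b * M1 c)
    (hU2 : ∀ a b c, U2 a b c = U1 a c b)
    (hU3 : ∀ a b c, U3 a b c = U1 b c a)
    (M3 : Fin d → Fin d → Fin d → ℝ)
    (hM3 : ∀ a b c, M3 a b c = (a0 + 1) * (a0 + 2) / 2 * E3 a b c
      + a0 ^ 2 * (M1 a * M1 b * M1 c)
      - a0 * (a0 + 1) / 2 * (U1 a b c + U2 a b c + U3 a b c)) :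
    ∀ a b c, M3 a b c = ∑ z, (α z / a0) * (φ z a * φ z b * φ z c) := by
  intro a b c
  have ha0pos : 0 < a0 := by
    rw [ha0]
    exact Finset.sum_pos (fun z _ => hα z) ⟨⟨0, hk⟩, Finset.mem_univ _⟩
  have hne0 : a0 ≠ 0 := ne_of_gt ha0pos
  have hne1 : a0 + 1 ≠ 0 := by nlinarith
  have hne2 : a0 + 2 ≠ 0 := by nlinarith
  set P := ∑ z, α z * φ z a with hPd
  set Q := ∑ z, α z * φ z b with hQd
  set R := ∑ z, α z * φ z c with hRd
  set Gab := ∑ z, α z * (α z + 1) * (φ z a * φ z b) with hGabd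
  set Gac := ∑ z, α z * (α z + 1) * (φ z a * φ z c) with hGacd
  set Gbc := ∑ z, α z * (α z + 1) * (φ z b * φ z c) with hGbcd
  set Aab := ∑ z, α z * α z * (φ z a * φ z b) with hAabd
  set Aac := ∑ z, α z * α z * (φ z a * φ z c) with hAacd
  set Abc := ∑ z, α z * α z * (φ z b * φ z c) with hAbcd
  set B := ∑ z, α z * α z * α z * (φ z a * φ z b * φ z c) with hBd
  set CC := ∑ z, α z * α z * (φ z a * φ z b * φ z c) with hCd
  set S := ∑ z, α z * (φ z a * φ z b * φ z c) with hSd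
  -- M1 entries
  have hM1e : ∀ x, M1 x = (∑ z, α z * φ z x) / a0 := by
    intro x
    rw [hM1]
    simp only [Finset.sum_apply, Pi.smul_apply, smul_eq_mul]
    rw [Finset.sum_div]
    exact Finset.sum_congr rfl fun z _ => by ring
  -- triple sum
  have eT : (∑ z₁, ∑ z₂, ∑ z₃, if z₁ ≠ z₂ ∧ z₂ ≠ z₃ ∧ z₁ ≠ z₃ then
        α z₁ * α z₂ * α z₃ * (φ z₁ a * φ z₂ b * φ z₃ c) else 0)
      = P * Q * R - Aab * R - P * Abc - Aac * Q + 2 * B := by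
    rw [tripleSplit (f := fun z₁ z₂ z₃ =>
        α z₁ * α z₂ * α z₃ * (φ z₁ a * φ z₂ b * φ z₃ c))]
    have c1 : (∑ z₁, ∑ z₂, ∑ z₃, α z₁ * α z₂ * α z₃ * (φ z₁ a * φ z₂ b * φ z₃ c))
        = P * Q * R := by
      rw [hPd, hQd, hRd,
        ← triple_prod (fun z => α z * φ z a) (fun z => α z * φ z b) (fun z => α z * φ z c)]
      exact Finset.sum_congr rfl fun z₁ _ => Finset.sum_congr rfl fun z₂ _ =>
        Finset.sum_congr rfl fun z₃ _ => by ring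
    have c2 : (∑ z₁, ∑ z₃, α z₁ * α z₁ * α z₃ * (φ z₁ a * φ z₁ b * φ z₃ c))
        = Aab * R := by
      rw [hAabd, hRd,
        ← pair_prod (fun z => α z * α z * (φ z a * φ z b)) (fun z => α z * φ z c)]
      exact Finset.sum_congr rfl fun z₁ _ => Finset.sum_congr rfl fun z₂ _ => by ring
    have c3 : (∑ z₁, ∑ z₂, α z₁ * α z₂ * α z₂ * (φ z₁ a * φ z₂ b * φ z₂ c))
        = P * Abc := by
      rw [hAbcd, hPd,
        ← pair_prod (fun z => α z * φ z a) (fun z => α z * α z * (φ z b * φ z c))]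
      exact Finset.sum_congr rfl fun z₁ _ => Finset.sum_congr rfl fun z₂ _ => by ring
    have c4 : (∑ z₁, ∑ z₂, α z₁ * α z₂ * α z₁ * (φ z₁ a * φ z₂ b * φ z₁ c))
        = Aac * Q := by
      rw [hAacd, hQd,
        ← pair_prod (fun z => α z * α z * (φ z a * φ z c)) (fun z => α z * φ z b)]
      exact Finset.sum_congr rfl fun z₁ _ => Finset.sum_congr rfl fun z₂ _ => by ring
    have c5 : (∑ z, 2 * (α z * α z * α z * (φ z a * φ z b * φ z c))) = 2 * B := by
      rw [hBd, Finset.mul_sum]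
    rw [c1, c2, c3, c4, c5]
  -- pair sum with (α z₁ + 1)
  have eD : (∑ z₁, ∑ z₂, if z₁ ≠ z₂ then
        α z₁ * α z₂ * (α z₁ + 1) *
          (φ z₁ a * φ z₁ b * φ z₂ c + φ z₁ a * φ z₁ c * φ z₂ b
            + φ z₁ c * φ z₁ b * φ z₂ a) else 0)
      = Gab * R + Gac * Q + Gbc * P - (3 * B + 3 * CC) := by
    rw [pairSplit (f := fun z₁ z₂ =>
        α z₁ * α z₂ * (α z₁ + 1) *
          (φ z₁ a * φ z₁ b * φ z₂ c + φ z₁ a * φ z₁ c * φ z₂ b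
            + φ z₁ c * φ z₁ b * φ z₂ a))]
    have d1 : (∑ z₁, ∑ z₂, α z₁ * α z₂ * (α z₁ + 1) *
          (φ z₁ a * φ z₁ b * φ z₂ c + φ z₁ a * φ z₁ c * φ z₂ b
            + φ z₁ c * φ z₁ b * φ z₂ a))
        = Gab * R + Gac * Q + Gbc * P := by
      have split : (∑ z₁, ∑ z₂, α z₁ * α z₂ * (α z₁ + 1) *
            (φ z₁ a * φ z₁ b * φ z₂ c + φ z₁ a * φ z₁ c * φ z₂ b
              + φ z₁ c * φ z₁ b * φ z₂ a))
          = (∑ z₁, ∑ z₂, (α z₁ * (α z₁ + 1) * (φ z₁ a * φ z₁ b)) * (α z₂ * φ z₂ c))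
            + (∑ z₁, ∑ z₂, (α z₁ * (α z₁ + 1) * (φ z₁ a * φ z₁ c)) * (α z₂ * φ z₂ b))
            + (∑ z₁, ∑ z₂, (α z₁ * (α z₁ + 1) * (φ z₁ b * φ z₁ c)) * (α z₂ * φ z₂ a)) := by
        simp only [← Finset.sum_add_distrib]
        exact Finset.sum_congr rfl fun z₁ _ => Finset.sum_congr rfl fun z₂ _ => by ring
      rw [split, pair_prod, pair_prod, pair_prod, hGabd, hGacd, hGbcd, hPd, hQd, hRd]
    have d2 : (∑ z, α z * α z * (α z + 1) *
          (φ z a * φ z b * φ z c + φ z a * φ z c * φ z b + φ z c * φ z b * φ z a))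
        = 3 * B + 3 * CC := by
      rw [hBd, hCd, Finset.mul_sum, Finset.mul_sum, ← Finset.sum_add_distrib]
      exact Finset.sum_congr rfl fun z _ => by ring
    rw [d1, d2]
  -- last plain sum
  have eE : (∑ z, α z * (α z + 1) * (α z + 2) * (φ z a * φ z b * φ z c))
      = B + 3 * CC + 2 * S := by
    rw [hBd, hCd, hSd, Finset.mul_sum, Finset.mul_sum]
    simp only [← Finset.sum_add_distrib]
    exact Finset.sum_congr rfl fun z _ => by ring
  -- E3 value
  have hE3v : E3 a b c = (a0 * (a0 + 1) * (a0 + 2))⁻¹ *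
      ((P * Q * R - Aab * R - P * Abc - Aac * Q + 2 * B)
        + (Gab * R + Gac * Q + Gbc * P - (3 * B + 3 * CC))
        + (B + 3 * CC + 2 * S)) := by
    rw [hE3 a b c, eT, eD, eE]
  -- E2 values
  have pq : (∑ z₁, ∑ z₂, α z₁ * α z₂ * (φ z₁ a * φ z₂ b)) = P * Q := by
    rw [hPd, hQd, ← pair_prod (fun z => α z * φ z a) (fun z => α z * φ z b)]
    exact Finset.sum_congr rfl fun _ _ => Finset.sum_congr rfl fun _ _ => by ring
  have pr : (∑ z₁, ∑ z₂, α z₁ * α z₂ * (φ z₁ a * φ z₂ c)) = P * R := by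
    rw [hPd, hRd, ← pair_prod (fun z => α z * φ z a) (fun z => α z * φ z c)]
    exact Finset.sum_congr rfl fun _ _ => Finset.sum_congr rfl fun _ _ => by ring
  have qr : (∑ z₁, ∑ z₂, α z₁ * α z₂ * (φ z₁ b * φ z₂ c)) = Q * R := by
    rw [hQd, hRd, ← pair_prod (fun z => α z * φ z b) (fun z => α z * φ z c)]
    exact Finset.sum_congr rfl fun _ _ => Finset.sum_congr rfl fun _ _ => by ring
  have hE2ab : E2 a b = (a0 * (a0 + 1))⁻¹ * ((P * Q - Aab) + Gab) := by
    rw [hE2 a b, pairSplit (f := fun z₁ z₂ => α z₁ * α z₂ * (φ z₁ a * φ z₂ b)),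
      pq, hAabd, hGabd]
  have hE2ac : E2 a c = (a0 * (a0 + 1))⁻¹ * ((P * R - Aac) + Gac) := by
    rw [hE2 a c, pairSplit (f := fun z₁ z₂ => α z₁ * α z₂ * (φ z₁ a * φ z₂ c)),
      pr, hAacd, hGacd]
  have hE2bc : E2 b c = (a0 * (a0 + 1))⁻¹ * ((Q * R - Abc) + Gbc) := by
    rw [hE2 b c, pairSplit (f := fun z₁ z₂ => α z₁ * α z₂ * (φ z₁ b * φ z₂ c)),
      qr, hAbcd, hGbcd]
  have hM1a : M1 a = P / a0 := by rw [hPd]; exact hM1e a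
  have hM1b : M1 b = Q / a0 := by rw [hQd]; exact hM1e b
  have hM1c : M1 c = R / a0 := by rw [hRd]; exact hM1e c
  have hRHS : (∑ z, α z / a0 * (φ z a * φ z b * φ z c)) = S / a0 := by
    rw [hSd, Finset.sum_div]
    exact Finset.sum_congr rfl fun z _ => by ring
  rw [hM3 a b c, hU2 a b c, hU3 a b c, hU1 a b c, hU1 a c b, hU1 b c a,
    hE3v, hE2ab, hE2ac, hE2bc, hM1a, hM1b, hM1c, hRHS]
  field_simp
  ring
end

section
/- The maximum of the cubic form of an orthogonally decomposable tensor over the unit sphere is the largest eigenvalue: Let v_1, …, v_k be an orthonormal family in ℝ^d and λ_1, …, λ_k > 0. Define T(u) = ∑_{i=1}^k λ_i ⟨v_i,u⟩³ for u ∈ ℝ^d. Then for every unit vector u (‖u‖ = 1), T(u) ≤ max_{1 ≤ i ≤ k} λ_i, and equality is attained at u = v_j for any j achieving the maximum; i.e., the supremum of T over the unit sphere equals max_i λ_i. (This justifies selecting the candidate with the largest value T(v,v,v) in the tensor power method.) -/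
open scoped RealInnerProductSpace

/-- **The maximum of the cubic form of an orthogonally decomposable tensor over
the unit sphere is the largest eigenvalue.** For orthonormal `v i` and positive
weights `λ i`, the cubic form `T u = ∑ i, λ i ⟪v i, u⟫³` satisfies
`T u ≤ max_i λ i` for every unit vector `u`, equality is attained at `u = v j`
for any `j` achieving the maximum, and hence `max_i λ i` is the greatest value
of `T` on the unit sphere. -/
theorem cubic_form_max_on_unit_sphere
    (d k : ℕ) (hk : 0 < k)
    (v : Fin k → EuclideanSpace ℝ (Fin d)) (lam : Fin k → ℝ)
    (hv : Orthonormal ℝ v) (hlam : ∀ i, 0 < lam i) :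
    (∀ u : EuclideanSpace ℝ (Fin d), ‖u‖ = 1 →
        ∑ i, lam i * ⟪v i, u⟫ ^ 3
          ≤ Finset.univ.sup' ⟨⟨0, hk⟩, Finset.mem_univ _⟩ lam) ∧
      (∀ j, lam j = Finset.univ.sup' ⟨⟨0, hk⟩, Finset.mem_univ _⟩ lam →
        ∑ i, lam i * ⟪v i, v j⟫ ^ 3
          = Finset.univ.sup' ⟨⟨0, hk⟩, Finset.mem_univ _⟩ lam) ∧
      IsGreatest {r : ℝ | ∃ u : EuclideanSpace ℝ (Fin d), ‖u‖ = 1 ∧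
          ∑ i, lam i * ⟪v i, u⟫ ^ 3 = r}
        (Finset.univ.sup' ⟨⟨0, hk⟩, Finset.mem_univ _⟩ lam) := by
  set M := Finset.univ.sup' ⟨⟨0, hk⟩, Finset.mem_univ _⟩ lam with hM
  have hMpos : 0 < M := by
    obtain ⟨i, _, hi⟩ := Finset.exists_mem_eq_sup' ⟨⟨0, hk⟩, Finset.mem_univ _⟩ lam
    rw [hM, hi]; exact hlam i
  have hle : ∀ i, lam i ≤ M := fun i => Finset.le_sup' lam (Finset.mem_univ i)
  have key : ∀ u : EuclideanSpace ℝ (Fin d), ‖u‖ = 1 →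
      ∑ i, lam i * ⟪v i, u⟫ ^ 3 ≤ M := by
    intro u hu
    have habs : ∀ i, |⟪v i, u⟫| ≤ 1 := by
      intro i
      have := abs_real_inner_le_norm (v i) u
      rwa [hv.1 i, hu, one_mul] at this
    have step : ∀ i ∈ Finset.univ, lam i * ⟪v i, u⟫ ^ 3 ≤ M * ⟪v i, u⟫ ^ 2 := by
      intro i _
      have h1 : ⟪v i, u⟫ ^ 3 ≤ ⟪v i, u⟫ ^ 2 := by
        have : ⟪v i, u⟫ ^ 3 ≤ |⟪v i, u⟫| * ⟪v i, u⟫ ^ 2 := by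
          have : ⟪v i, u⟫ * ⟪v i, u⟫ ^ 2 ≤ |⟪v i, u⟫| * ⟪v i, u⟫ ^ 2 :=
            mul_le_mul_of_nonneg_right (le_abs_self _) (sq_nonneg _)
          calc ⟪v i, u⟫ ^ 3 = ⟪v i, u⟫ * ⟪v i, u⟫ ^ 2 := by ring
            _ ≤ _ := this
        calc ⟪v i, u⟫ ^ 3 ≤ |⟪v i, u⟫| * ⟪v i, u⟫ ^ 2 := this
          _ ≤ 1 * ⟪v i, u⟫ ^ 2 := mul_le_mul_of_nonneg_right (habs i) (sq_nonneg _)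
          _ = ⟪v i, u⟫ ^ 2 := one_mul _
      calc lam i * ⟪v i, u⟫ ^ 3 ≤ lam i * ⟪v i, u⟫ ^ 2 := by
            rcases le_or_gt (⟪v i, u⟫ ^ 3) (⟪v i, u⟫ ^ 2) with h | h
            · exact mul_le_mul_of_nonneg_left h (hlam i).le
            · exact absurd h1 (not_le.mpr h)
        _ ≤ M * ⟪v i, u⟫ ^ 2 := mul_le_mul_of_nonneg_right (hle i) (sq_nonneg _)
    have bessel : ∑ i, ⟪v i, u⟫ ^ 2 ≤ 1 := by
      have := hv.sum_inner_products_le (s := Finset.univ) u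
      simp only [Real.norm_eq_abs, sq_abs] at this
      rwa [hu, one_pow] at this
    calc ∑ i, lam i * ⟪v i, u⟫ ^ 3 ≤ ∑ i, M * ⟪v i, u⟫ ^ 2 := Finset.sum_le_sum step
      _ = M * ∑ i, ⟪v i, u⟫ ^ 2 := by rw [Finset.mul_sum]
      _ ≤ M * 1 := mul_le_mul_of_nonneg_left bessel hMpos.le
      _ = M := mul_one M
  have eqj : ∀ j : Fin k, ∑ i, lam i * ⟪v i, v j⟫ ^ 3 = lam j := by
    intro j
    rw [Finset.sum_eq_single j]
    · have : ⟪v j, v j⟫ = 1 := by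
        rw [real_inner_self_eq_norm_sq, hv.1 j]; norm_num
      rw [this]; ring
    · intro i _ hij
      rw [hv.2 hij]; ring
    · intro h; exact absurd (Finset.mem_univ j) h
  refine ⟨key, fun j hj => by rw [eqj j, hj], ?_, ?_⟩
  · obtain ⟨j, _, hj⟩ := Finset.exists_mem_eq_sup' ⟨⟨0, hk⟩, Finset.mem_univ _⟩ lam
    exact ⟨v j, hv.1 j, by rw [eqj j, ← hj]⟩
  · rintro r ⟨u, hu, rfl⟩; exact key u hu
end
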